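/- For integers 1 ≤ n_1 ≤ n_2 define P_{(n_1,n_2)}(t) = ∑_{i=1}^{n_1} i(t^{4i−2}+t^{4i−4}) + ∑_{i=2n_1}^{n_1+n_2−1} (2n_1+1)t^{2i} + ∑_{i=n_1+n_2}^{2n_1+n_2−1} 4(2n_1+n_2−i)t^{2i} + t^{4n_1+2n_2} ∈ ℤ[t], and extend by symmetry P_{(n_1,n_2)} := P_{(n_2,n_1)} when n_1 > n_2. Let f(T_1,T_2) denote the element of ℤ[t][[T_1,T_2]] given by (t²+1)T_1T_2·[(1−T_2)(1−T_1T_2)(1−t⁴T_1T_2)²]^{−1} + t⁴T_1T_2²(3−t⁴T_1T_2)·[(1−T_2)(1−t²T_2)(1−t⁴T_1T_2)²]^{−1} + 4t⁴T_1T_2·[(1−t²T_2)(1−t⁴T_1T_2)²(1−t⁶T_1T_2)]^{−1} + t⁶T_1T_2·[(1−t²T_2)(1−t⁶T_1T_2)]^{−1}, and let g(T_1,T_2) = (t²+1)T_1T_2·[(1−T_1T_2)(1−t⁴T_1T_2)²]^{−1} + 4t⁴T_1T_2·[(1−t⁴T_1T_2)²(1−t⁶T_1T_2)]^{−1} + t⁶T_1T_2·(1−t⁶T_1T_2)^{−1}.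 Then ∑_{n_1=1}^{∞} ∑_{n_2=1}^{∞} P_{(n_1,n_2)}(t)·T_1^{n_1}T_2^{n_2} = f(T_1,T_2) + f(T_2,T_1) − g(T_1,T_2). In particular, this double generating series is a rational function, i.e. it lies in ℤ(t, T_1, T_2). -/

import Mathlib

open Finset

/-- The Poincaré polynomial `P_{(n₁,n₂)}(t)` of the fundamental domain `F_γ` for `GL₃`
with root valuation `(n₁, n₂)`, `n₁ ≤ n₂`; it is extended by symmetry to all pairs in the
theorem below. -/
noncomputable def gl3PoincarePoly (n₁ n₂ : ℕ) : Polynomial ℤ :=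
  ∑ i ∈ Icc 1 n₁, (i : Polynomial ℤ) *
      (Polynomial.X ^ (4 * i - 2) + Polynomial.X ^ (4 * i - 4))
  + ∑ i ∈ Icc (2 * n₁) (n₁ + n₂ - 1),
      ((2 * n₁ + 1 : ℕ) : Polynomial ℤ) * Polynomial.X ^ (2 * i)
  + ∑ i ∈ Icc (n₁ + n₂) (2 * n₁ + n₂ - 1),
      ((4 * (2 * n₁ + n₂ - i) : ℕ) : Polynomial ℤ) * Polynomial.X ^ (2 * i)
  + Polynomial.X ^ (4 * n₁ + 2 * n₂)

/-- The constant `t`-polynomial viewed in `ℤ[t][[T₁, T₂]]`. -/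
noncomputable def gl3C (p : Polynomial ℤ) : MvPowerSeries (Fin 2) (Polynomial ℤ) :=
  MvPowerSeries.C (σ := Fin 2) (R := Polynomial ℤ) p

/-- `f(A, B) = (t²+1)AB/[(1−B)(1−AB)(1−t⁴AB)²] + t⁴AB²(3−t⁴AB)/[(1−B)(1−t²B)(1−t⁴AB)²]
  + 4t⁴AB/[(1−t²B)(1−t⁴AB)²(1−t⁶AB)] + t⁶AB/[(1−t²B)(1−t⁶AB)]`, the inverses being
`MvPowerSeries.invOfUnit _ 1`. -/
noncomputable def gl3F (A B : MvPowerSeries (Fin 2) (Polynomial ℤ)) :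
    MvPowerSeries (Fin 2) (Polynomial ℤ) :=
  gl3C (Polynomial.X ^ 2 + 1) * A * B *
      MvPowerSeries.invOfUnit
        ((1 - B) * (1 - A * B) * (1 - gl3C (Polynomial.X ^ 4) * A * B) ^ 2) 1
    + gl3C (Polynomial.X ^ 4) * A * B ^ 2 * (3 - gl3C (Polynomial.X ^ 4) * A * B) *
      MvPowerSeries.invOfUnit
        ((1 - B) * (1 - gl3C (Polynomial.X ^ 2) * B) *
          (1 - gl3C (Polynomial.X ^ 4) * A * B) ^ 2) 1
    + 4 * (gl3C (Polynomial.X ^ 4) * A * B) *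
      MvPowerSeries.invOfUnit
        ((1 - gl3C (Polynomial.X ^ 2) * B) * (1 - gl3C (Polynomial.X ^ 4) * A * B) ^ 2 *
          (1 - gl3C (Polynomial.X ^ 6) * A * B)) 1
    + gl3C (Polynomial.X ^ 6) * A * B *
      MvPowerSeries.invOfUnit
        ((1 - gl3C (Polynomial.X ^ 2) * B) * (1 - gl3C (Polynomial.X ^ 6) * A * B)) 1

/-- `g(A, B) = (t²+1)AB/[(1−AB)(1−t⁴AB)²] + 4t⁴AB/[(1−t⁴AB)²(1−t⁶AB)] + t⁶AB/(1−t⁶AB)`,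
the inverses being `MvPowerSeries.invOfUnit _ 1`. -/
noncomputable def gl3G (A B : MvPowerSeries (Fin 2) (Polynomial ℤ)) :
    MvPowerSeries (Fin 2) (Polynomial ℤ) :=
  gl3C (Polynomial.X ^ 2 + 1) * A * B *
      MvPowerSeries.invOfUnit
        ((1 - A * B) * (1 - gl3C (Polynomial.X ^ 4) * A * B) ^ 2) 1
    + 4 * (gl3C (Polynomial.X ^ 4) * A * B) *
      MvPowerSeries.invOfUnit
        ((1 - gl3C (Polynomial.X ^ 4) * A * B) ^ 2 *
          (1 - gl3C (Polynomial.X ^ 6) * A * B)) 1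
    + gl3C (Polynomial.X ^ 6) * A * B *
      MvPowerSeries.invOfUnit (1 - gl3C (Polynomial.X ^ 6) * A * B) 1

/-!
Every summand of `f(T₀, T₁)` and of `g(T₀, T₁)` has the shape `H(T₀T₁) · G(T₁)`, whose coefficient
of `T₀^m T₁^n` is `H_m G_{n-m}` for `m ≤ n` and `0` otherwise. Dividing by `1 - c u` is the
recursion `geomConv`, so each inverse in `f` and `g` is an explicit nested `geomConv`, verified by
letting the factors of the denominator undo it one at a time. Evaluating the coefficients,
`f(T₀, T₁)` contributes `P_{(m,n)}` exactly when `1 ≤ m ≤ n` and `g(T₀, T₁)` contributes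
`P_{(m,m)}` exactly on the diagonal, while `f(T₁, T₀)` is `f(T₀, T₁)` with the variables swapped;
on the diagonal the three contributions are `P + P - P`.
-/

open MvPowerSeries

section Sequences

variable {R : Type*} [CommSemiring R]

/-- The coefficient sequence of `u · H(u)`. -/
def shiftSeq (H : ℕ → R) : ℕ → R
  | 0 => 0
  | m + 1 => H m

/-- The coefficient sequence of `H(u) / (1 - c u)`. -/
def geomConv (H : ℕ → R) (c : R) : ℕ → R
  | 0 => H 0
  | m + 1 => H (m + 1) + c * geomConv H c m

@[simp]
lemma shiftSeq_zero (H : ℕ → R) : shiftSeq H 0 = 0 := rfl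

@[simp]
lemma shiftSeq_succ (H : ℕ → R) (m : ℕ) : shiftSeq H (m + 1) = H m := rfl

lemma shiftSeq_apply (H : ℕ → R) (m : ℕ) : shiftSeq H m = if 1 ≤ m then H (m - 1) else 0 := by
  cases m <;> simp

lemma geomConv_eq_add_smul_shiftSeq (H : ℕ → R) (c : R) :
    geomConv H c = H + c • shiftSeq (geomConv H c) := by
  funext m
  cases m <;> simp [geomConv]

lemma geomConv_eq_sum (H : ℕ → R) (c : R) (m : ℕ) :
    geomConv H c m = ∑ k ∈ range (m + 1), H k * c ^ (m - k) := by
  induction m with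
  | zero => simp [geomConv]
  | succ m ih =>
    rw [geomConv, ih, sum_range_succ _ (m + 1), mul_sum, Nat.sub_self, pow_zero, mul_one, add_comm]
    congr 1
    refine sum_congr rfl fun k hk => ?_
    rw [Nat.sub_add_comm (Nat.le_of_lt_succ (mem_range.1 hk)), pow_succ]
    ring

lemma shiftSeq_geomConv_one (H : ℕ → R) (j : ℕ) : shiftSeq (geomConv H 1) j = ∑ i ∈ range j, H i := by
  cases j <;> simp [geomConv_eq_sum]

lemma geomConv_single_zero (c : R) : geomConv (Pi.single 0 1) c = fun m : ℕ => c ^ m := by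
  funext m
  induction m with
  | zero => simp [geomConv]
  | succ m ih => simp [geomConv, ih, pow_succ, mul_comm]

lemma geomConv_pow_self (c : R) :
    geomConv (fun m : ℕ => c ^ m) c = fun m : ℕ => (m + 1 : R) * c ^ m := by
  funext m
  induction m with
  | zero => simp [geomConv]
  | succ m ih =>
    simp only [geomConv, ih]
    push_cast
    ring

end Sequences

section DiagProd

variable {R : Type*} [CommRing R]

lemma geomConv_sub_smul_shiftSeq (H : ℕ → R) (c : R) :
    geomConv H c - c • shiftSeq (geomConv H c) = H :=
  sub_eq_of_eq_add (geomConv_eq_add_smul_shiftSeq H c)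

lemma smul_geomConv_sub_smul_shiftSeq (a c : R) (H : ℕ → R) :
    a • geomConv H c - c • shiftSeq (geomConv H c) = (a - 1) • geomConv H c + H := by
  have h := geomConv_sub_smul_shiftSeq H c
  set G := geomConv H c
  rw [← h, sub_smul, one_smul]
  abel

/-- The series `H(T₀T₁) · G(T₁)`. -/
def diagProd (H G : ℕ → R) : MvPowerSeries (Fin 2) R :=
  fun d => if d 0 ≤ d 1 then H (d 0) * G (d 1 - d 0) else 0

lemma coeff_diagProd (H G : ℕ → R) (d : Fin 2 →₀ ℕ) :
    coeff d (diagProd H G) = if d 0 ≤ d 1 then H (d 0) * G (d 1 - d 0) else 0 := rfl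

lemma coeff_single_add_single_diagProd (H G : ℕ → R) (m n : ℕ) :
    coeff (Finsupp.single 0 m + Finsupp.single 1 n) (diagProd H G) =
      if m ≤ n then H m * G (n - m) else 0 := by
  simp [coeff_diagProd]

lemma diagProd_single_zero :
    diagProd (Pi.single 0 1) (Pi.single 0 1) = (1 : MvPowerSeries (Fin 2) R) := by
  ext d
  have hd : d = 0 ↔ d 0 = 0 ∧ d 1 = 0 := by simp [Finsupp.ext_iff, Fin.forall_fin_two]
  simp only [coeff_diagProd, coeff_one, hd]
  by_cases h0 : d 0 = 0 <;> simp [h0, Pi.single_apply, Nat.sub_eq_zero_iff_le]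

lemma diagProd_sub_left (H H' G : ℕ → R) :
    diagProd (H - H') G = diagProd H G - diagProd H' G := by
  ext d
  simp only [coeff_diagProd, map_sub, Pi.sub_apply]
  split_ifs <;> ring

lemma diagProd_sub_right (H G G' : ℕ → R) :
    diagProd H (G - G') = diagProd H G - diagProd H G' := by
  ext d
  simp only [coeff_diagProd, map_sub, Pi.sub_apply]
  split_ifs <;> ring

lemma C_mul_diagProd_left (a : R) (H G : ℕ → R) : C a * diagProd H G = diagProd (a • H) G := by
  ext d
  simp only [coeff_C_mul, coeff_diagProd, Pi.smul_apply, smul_eq_mul]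
  split_ifs <;> ring

lemma C_mul_diagProd_right (a : R) (H G : ℕ → R) : C a * diagProd H G = diagProd H (a • G) := by
  ext d
  simp only [coeff_C_mul, coeff_diagProd, Pi.smul_apply, smul_eq_mul]
  split_ifs <;> ring

lemma X_one_mul_diagProd (H G : ℕ → R) : X 1 * diagProd H G = diagProd H (shiftSeq G) := by
  ext d
  rw [X_def, coeff_monomial_mul, coeff_diagProd, coeff_diagProd, shiftSeq_apply]
  simp only [Finsupp.le_def, Fin.forall_fin_two, Finsupp.tsub_apply, Finsupp.single_apply,
    Fin.isValue, one_ne_zero, ↓reduceIte, zero_le, true_and, tsub_zero, mul_ite, one_mul, mul_zero]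
  split_ifs <;> first | rfl | omega | (congr 2; omega)

lemma X_zero_mul_diagProd_shiftSeq (H G : ℕ → R) :
    X 0 * diagProd H (shiftSeq G) = diagProd (shiftSeq H) G := by
  ext d
  rw [X_def, coeff_monomial_mul, coeff_diagProd, coeff_diagProd, shiftSeq_apply, shiftSeq_apply]
  simp only [Finsupp.le_def, Fin.forall_fin_two, Finsupp.tsub_apply, Finsupp.single_apply,
    ↓reduceIte, Fin.isValue, zero_ne_one, zero_le, and_true, tsub_zero, tsub_le_iff_right, mul_ite,
    mul_zero, one_mul, ite_mul, zero_mul]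
  split_ifs <;> first | rfl | omega | (congr 2; omega)

lemma one_sub_C_mul_X_zero_mul_X_one_mul_diagProd (c : R) (H G : ℕ → R) :
    (1 - C c * (X 0 * X 1)) * diagProd (geomConv H c) G = diagProd H G := by
  rw [sub_mul, one_mul, mul_assoc, mul_assoc, X_one_mul_diagProd, X_zero_mul_diagProd_shiftSeq,
    C_mul_diagProd_left, ← diagProd_sub_left, geomConv_sub_smul_shiftSeq]

lemma one_sub_C_mul_X_one_mul_diagProd (c : R) (H G : ℕ → R) :
    (1 - C c * X 1) * diagProd H (geomConv G c) = diagProd H G := by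
  rw [sub_mul, one_mul, mul_assoc, X_one_mul_diagProd, C_mul_diagProd_right, ← diagProd_sub_right,
    geomConv_sub_smul_shiftSeq]

lemma one_sub_X_zero_mul_X_one_mul_diagProd (H G : ℕ → R) :
    (1 - X 0 * X 1) * diagProd (geomConv H 1) G = diagProd H G := by
  simpa using one_sub_C_mul_X_zero_mul_X_one_mul_diagProd 1 H G

lemma one_sub_X_one_mul_diagProd (H G : ℕ → R) :
    (1 - X 1) * diagProd H (geomConv G 1) = diagProd H G := by
  simpa using one_sub_C_mul_X_one_mul_diagProd 1 H G

lemma coeff_single_add_single_rename_swap (φ : MvPowerSeries (Fin 2) R) (m n : ℕ) :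
    coeff (Finsupp.single 0 m + Finsupp.single 1 n) (rename (Equiv.swap 0 1) φ) =
      coeff (Finsupp.single 0 n + Finsupp.single 1 m) φ := by
  have := coeff_embDomain_rename (Equiv.swap (0 : Fin 2) 1).toEmbedding φ
    (Finsupp.single 0 n + Finsupp.single 1 m)
  convert this using 2 <;> simp [Finsupp.embDomain_add, add_comm]

end DiagProd

lemma MvPowerSeries.invOfUnit_eq_of_mul_eq_one {σ R : Type*} [Ring R] {φ ψ : MvPowerSeries σ R}
    (hφ : constantCoeff φ = 1) (h : φ * ψ = 1) : invOfUnit φ 1 = ψ :=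
  left_inv_eq_right_inv (invOfUnit_mul φ 1 (by simpa using hφ)) h

lemma MvPowerSeries.rename_invOfUnit_one {σ τ R : Type*} [CommRing R] (f : σ → τ)
    [Filter.TendstoCofinite f] {φ : MvPowerSeries σ R} (hφ : constantCoeff φ = 1) :
    rename f (invOfUnit φ 1) = invOfUnit (rename f φ) 1 := by
  refine (invOfUnit_eq_of_mul_eq_one (by rwa [constantCoeff_rename]) ?_).symm
  rw [← map_mul, mul_invOfUnit φ 1 (by simpa using hφ), map_one]

local notation "t" => (Polynomial.X : Polynomial ℤ)
local notation "δ" => (Pi.single 0 1 : ℕ → Polynomial ℤ)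

-- In each inverse below, the factors are ordered so that, multiplied in from the inside, each one
-- removes the outermost `geomConv` of the candidate.
lemma invOfUnit_gl3F_denom₁ :
    invOfUnit ((1 - X 1) * (1 - X 0 * X 1) * (1 - gl3C (t ^ 4) * X 0 * X 1) ^ 2) 1
      = diagProd (geomConv (geomConv (geomConv δ (t ^ 4)) (t ^ 4)) 1) (geomConv δ 1) := by
  apply invOfUnit_eq_of_mul_eq_one
  · simp [gl3C]
  · rw [mul_right_comm (1 - X 1)]
    simp only [gl3C, pow_two, mul_assoc, one_sub_C_mul_X_zero_mul_X_one_mul_diagProd,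
      one_sub_X_zero_mul_X_one_mul_diagProd, one_sub_X_one_mul_diagProd, diagProd_single_zero]

lemma invOfUnit_gl3F_denom₂ :
    invOfUnit ((1 - X 1) * (1 - gl3C (t ^ 2) * X 1) * (1 - gl3C (t ^ 4) * X 0 * X 1) ^ 2) 1
      = diagProd (geomConv (geomConv δ (t ^ 4)) (t ^ 4)) (geomConv (geomConv δ (t ^ 2)) 1) := by
  apply invOfUnit_eq_of_mul_eq_one
  · simp [gl3C]
  · rw [mul_comm (1 - X 1)]
    simp only [gl3C, pow_two, mul_assoc, one_sub_C_mul_X_zero_mul_X_one_mul_diagProd,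
      one_sub_C_mul_X_one_mul_diagProd, one_sub_X_one_mul_diagProd, diagProd_single_zero]

lemma invOfUnit_gl3F_denom₃ :
    invOfUnit ((1 - gl3C (t ^ 2) * X 1) * (1 - gl3C (t ^ 4) * X 0 * X 1) ^ 2 *
      (1 - gl3C (t ^ 6) * X 0 * X 1)) 1
      = diagProd (geomConv (geomConv (geomConv δ (t ^ 4)) (t ^ 4)) (t ^ 6)) (geomConv δ (t ^ 2)) := by
  apply invOfUnit_eq_of_mul_eq_one
  · simp [gl3C]
  · simp only [gl3C, pow_two, mul_assoc, one_sub_C_mul_X_zero_mul_X_one_mul_diagProd,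
      one_sub_C_mul_X_one_mul_diagProd, diagProd_single_zero]

lemma invOfUnit_gl3F_denom₄ :
    invOfUnit ((1 - gl3C (t ^ 2) * X 1) * (1 - gl3C (t ^ 6) * X 0 * X 1)) 1
      = diagProd (geomConv δ (t ^ 6)) (geomConv δ (t ^ 2)) := by
  apply invOfUnit_eq_of_mul_eq_one
  · simp [gl3C]
  · simp only [gl3C, mul_assoc, one_sub_C_mul_X_zero_mul_X_one_mul_diagProd,
      one_sub_C_mul_X_one_mul_diagProd, diagProd_single_zero]

lemma invOfUnit_gl3G_denom₁ :
    invOfUnit ((1 - X 0 * X 1) * (1 - gl3C (t ^ 4) * X 0 * X 1) ^ 2) 1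
      = diagProd (geomConv (geomConv (geomConv δ (t ^ 4)) (t ^ 4)) 1) δ := by
  apply invOfUnit_eq_of_mul_eq_one
  · simp [gl3C]
  · rw [mul_comm (1 - X 0 * X 1)]
    simp only [gl3C, pow_two, mul_assoc, one_sub_C_mul_X_zero_mul_X_one_mul_diagProd,
      one_sub_X_zero_mul_X_one_mul_diagProd, diagProd_single_zero]

lemma invOfUnit_gl3G_denom₂ :
    invOfUnit ((1 - gl3C (t ^ 4) * X 0 * X 1) ^ 2 * (1 - gl3C (t ^ 6) * X 0 * X 1)) 1
      = diagProd (geomConv (geomConv (geomConv δ (t ^ 4)) (t ^ 4)) (t ^ 6)) δ := by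
  apply invOfUnit_eq_of_mul_eq_one
  · simp [gl3C]
  · simp only [gl3C, pow_two, mul_assoc, one_sub_C_mul_X_zero_mul_X_one_mul_diagProd,
      diagProd_single_zero]

lemma invOfUnit_gl3G_denom₃ :
    invOfUnit (1 - gl3C (t ^ 6) * X 0 * X 1) 1 = diagProd (geomConv δ (t ^ 6)) δ := by
  apply invOfUnit_eq_of_mul_eq_one
  · simp [gl3C]
  · simp only [gl3C, mul_assoc, one_sub_C_mul_X_zero_mul_X_one_mul_diagProd, diagProd_single_zero]

lemma gl3F_X_zero_X_one : gl3F (X 0) (X 1) =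
    diagProd ((t ^ 2 + 1) • shiftSeq (geomConv (geomConv (geomConv δ (t ^ 4)) (t ^ 4)) 1))
      (geomConv δ 1)
    + diagProd (t ^ 4 • shiftSeq ((3 : Polynomial ℤ) • geomConv (geomConv δ (t ^ 4)) (t ^ 4) -
          t ^ 4 • shiftSeq (geomConv (geomConv δ (t ^ 4)) (t ^ 4))))
      (shiftSeq (geomConv (geomConv δ (t ^ 2)) 1))
    + diagProd ((4 * t ^ 4) • shiftSeq (geomConv (geomConv (geomConv δ (t ^ 4)) (t ^ 4)) (t ^ 6)))
      (geomConv δ (t ^ 2))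
    + diagProd (t ^ 6 • shiftSeq (geomConv δ (t ^ 6))) (geomConv δ (t ^ 2)) := by
  rw [gl3F, invOfUnit_gl3F_denom₁, invOfUnit_gl3F_denom₂, invOfUnit_gl3F_denom₃,
    invOfUnit_gl3F_denom₄, sq (X 1 : MvPowerSeries (Fin 2) (Polynomial ℤ)),
    ← map_ofNat (C (σ := Fin 2) (R := Polynomial ℤ)) 3,
    ← map_ofNat (C (σ := Fin 2) (R := Polynomial ℤ)) 4]
  simp only [gl3C, mul_assoc, sub_mul, X_one_mul_diagProd, X_zero_mul_diagProd_shiftSeq,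
    C_mul_diagProd_left, ← diagProd_sub_left, smul_smul]

lemma gl3G_X_zero_X_one : gl3G (X 0) (X 1) =
    diagProd ((t ^ 2 + 1) • shiftSeq (geomConv (geomConv (geomConv δ (t ^ 4)) (t ^ 4)) 1)) δ
    + diagProd ((4 * t ^ 4) • shiftSeq (geomConv (geomConv (geomConv δ (t ^ 4)) (t ^ 4)) (t ^ 6))) δ
    + diagProd (t ^ 6 • shiftSeq (geomConv δ (t ^ 6))) δ := by
  rw [gl3G, invOfUnit_gl3G_denom₁, invOfUnit_gl3G_denom₂, invOfUnit_gl3G_denom₃,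
    ← map_ofNat (C (σ := Fin 2) (R := Polynomial ℤ)) 4]
  simp only [gl3C, mul_assoc, X_one_mul_diagProd, X_zero_mul_diagProd_shiftSeq,
    C_mul_diagProd_left, smul_smul]

lemma gl3F_X_one_X_zero : gl3F (X 1) (X 0) = rename (Equiv.swap 0 1) (gl3F (X 0) (X 1)) := by
  simp [gl3F, gl3C, rename_invOfUnit_one, map_ofNat]

/-- The coefficient of `T₀^m T₁^(m+j)` in `f(T₀, T₁)`. -/
noncomputable def gl3Coeff : ℕ → ℕ → Polynomial ℤ
  | 0, _ => 0
  | a + 1, j =>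
    (t ^ 2 + 1) * ∑ k ∈ range (a + 1), (k + 1 : Polynomial ℤ) * t ^ (4 * k)
      + (2 * a + 3 : Polynomial ℤ) * t ^ (4 * a + 4) * ∑ i ∈ range j, t ^ (2 * i)
      + 4 * t ^ 4 * (∑ k ∈ range (a + 1), (k + 1 : Polynomial ℤ) * t ^ (4 * k) * t ^ (6 * (a - k)))
        * t ^ (2 * j)
      + t ^ (6 * a + 6) * t ^ (2 * j)

lemma coeff_gl3F_X_zero_X_one (m n : ℕ) :
    coeff (Finsupp.single 0 m + Finsupp.single 1 n) (gl3F (X 0) (X 1)) =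
      if m ≤ n then gl3Coeff m (n - m) else 0 := by
  rw [gl3F_X_zero_X_one, smul_geomConv_sub_smul_shiftSeq]
  simp only [geomConv_single_zero, geomConv_pow_self, one_pow, map_add,
    coeff_single_add_single_diagProd]
  split_ifs with h
  · obtain ⟨j, rfl⟩ := Nat.exists_eq_add_of_le h
    rw [Nat.add_sub_cancel_left]
    rcases m with _ | a
    · simp [gl3Coeff]
    · simp only [shiftSeq_succ, shiftSeq_geomConv_one, Pi.smul_apply, Pi.add_apply, smul_eq_mul,
        geomConv_eq_sum, gl3Coeff, one_pow, mul_one, ← pow_mul]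
      ring
  · simp

lemma coeff_gl3G_X_zero_X_one (m n : ℕ) :
    coeff (Finsupp.single 0 m + Finsupp.single 1 n) (gl3G (X 0) (X 1)) =
      if m = n then gl3Coeff m 0 else 0 := by
  rw [gl3G_X_zero_X_one]
  simp only [geomConv_single_zero, geomConv_pow_self, map_add, coeff_single_add_single_diagProd]
  split_ifs with hle heq heq
  · subst heq
    rcases m with _ | a
    · simp [gl3Coeff]
    · simp only [shiftSeq_succ, Pi.smul_apply, smul_eq_mul, geomConv_eq_sum, gl3Coeff, one_pow,
        mul_one, ← pow_mul, Nat.sub_self, Pi.single_eq_same, range_zero, sum_empty, mul_zero,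
        add_zero, pow_zero]
      ring
  · simp [show n - m ≠ 0 by omega]
  · omega
  · simp

lemma sum_Icc_mul_pow_add_pow (m : ℕ) :
    ∑ i ∈ Icc 1 m, (i : Polynomial ℤ) * (t ^ (4 * i - 2) + t ^ (4 * i - 4)) =
      (t ^ 2 + 1) * ∑ k ∈ range m, (k + 1 : Polynomial ℤ) * t ^ (4 * k) := by
  induction m with
  | zero => simp
  | succ m ih =>
    rw [sum_Icc_succ_top (by omega), ih, sum_range_succ, show 4 * (m + 1) - 2 = 4 * m + 2 by omega,
      show 4 * (m + 1) - 4 = 4 * m by omega]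
    push_cast
    ring

lemma gl3PoincarePoly_succ (a j : ℕ) :
    gl3PoincarePoly (a + 1) (a + 1 + j) = gl3Coeff (a + 1) j := by
  rw [gl3PoincarePoly, gl3Coeff, sum_Icc_mul_pow_add_pow]
  simp only [← Finset.Ico_add_one_right_eq_Icc, Finset.sum_Ico_eq_sum_range]
  rw [show a + 1 + (a + 1 + j) - 1 + 1 - 2 * (a + 1) = j by omega,
    show 2 * (a + 1) + (a + 1 + j) - 1 + 1 - (a + 1 + (a + 1 + j)) = a + 1 by omega]
  refine congrArg₂ (· + ·) (congrArg₂ (· + ·) (congrArg₂ (· + ·) rfl ?_) ?_) ?_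
  · rw [mul_sum]
    refine sum_congr rfl fun i _ => ?_
    push_cast
    ring
  · conv_rhs => rw [← sum_range_reflect]
    rw [mul_sum, sum_mul]
    refine sum_congr rfl fun k hk => ?_
    obtain ⟨r, rfl⟩ := Nat.exists_eq_add_of_le (Nat.lt_succ_iff.1 (mem_range.1 hk))
    rw [show 4 * (2 * (k + r + 1) + (k + r + 1 + j) - (k + r + 1 + (k + r + 1 + j) + k))
        = 4 * (r + 1) by omega, show k + r + 1 - 1 - k = r by omega, show k + r - r = k by omega]
    push_cast
    ring
  · rw [← pow_add]
    ring

lemma gl3Coeff_sub {m n : ℕ} (h : m ≤ n) :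
    gl3Coeff m (n - m) = if 1 ≤ m then gl3PoincarePoly m n else 0 := by
  obtain ⟨j, rfl⟩ := Nat.exists_eq_add_of_le h
  rcases m with _ | a
  · rfl
  · rw [Nat.add_sub_cancel_left, gl3PoincarePoly_succ, if_pos (Nat.le_add_left 1 a)]

/-- **Rationality conjecture for `GL₃`.**  With `P_{(n₁,n₂)} := P_{(n₂,n₁)}` for `n₁ > n₂`,
one has in `ℤ[t][[T₁,T₂]]` the identity
`∑_{n₁ ≥ 1} ∑_{n₂ ≥ 1} P_{(n₁,n₂)}(t) T₁^{n₁} T₂^{n₂} = f(T₁,T₂) + f(T₂,T₁) − g(T₁,T₂)`,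
stated coefficientwise; in particular the double generating series is a rational function. -/
theorem gl3_rationality :
    ∀ n₁ n₂ : ℕ,
      MvPowerSeries.coeff (σ := Fin 2) (R := Polynomial ℤ) (Finsupp.single 0 n₁ + Finsupp.single 1 n₂)
        (gl3F (MvPowerSeries.X 0) (MvPowerSeries.X 1)
          + gl3F (MvPowerSeries.X 1) (MvPowerSeries.X 0)
          - gl3G (MvPowerSeries.X 0) (MvPowerSeries.X 1))
      = if 1 ≤ n₁ ∧ 1 ≤ n₂ then
          (if n₁ ≤ n₂ then gl3PoincarePoly n₁ n₂ else gl3PoincarePoly n₂ n₁)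
        else 0 := by
  intro m n
  rw [map_sub, map_add, gl3F_X_one_X_zero, coeff_single_add_single_rename_swap,
    coeff_gl3F_X_zero_X_one, coeff_gl3F_X_zero_X_one, coeff_gl3G_X_zero_X_one]
  rcases lt_trichotomy m n with h | rfl | h
  · have hmn : 1 ≤ m → 1 ≤ n := fun hm => hm.trans h.le
    simp [h.le, not_le.2 h, h.ne, gl3Coeff_sub, and_iff_left_of_imp hmn]
  · simpa using gl3Coeff_sub le_rfl
  · have hnm : 1 ≤ n → 1 ≤ m := fun hn => hn.trans h.le
    simp [h.le, not_le.2 h, h.ne', gl3Coeff_sub, and_iff_right_of_imp hnm]
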